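/- Relative invariance of the non-commutative cross-ratio (Theorem 2.8): let x, y, z, t ∈ R², let g be an invertible 2×2 matrix over R, and let λ₁, λ₂, λ₃, λ₄ ∈ R be nonzero. If both κ(x, y, z, t) and κ(g·x·λ₁, g·y·λ₂, g·z·λ₃, g·t·λ₄) are defined, then κ(g·x·λ₁, g·y·λ₂, g·z·λ₃, g·t·λ₄) = λ₃⁻¹ · κ(x, y, z, t) · λ₃. -/
import Mathlib


/-- The non-commutative cross-ratio `κ(x, y, z, t)` of four column vectors in `R²`:
`κ(x,y,z,t) = (z₁ − y₁y₂⁻¹z₂)⁻¹ (t₁ − y₁y₂⁻¹t₂) (t₁ − x₁x₂⁻¹t₂)⁻¹ (z₁ − x₁x₂⁻¹z₂)`. -/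
noncomputable def ncr {R : Type*} [DivisionRing R] (x y z t : Fin 2 → R) : R :=
  (z 0 - y 0 * (y 1)⁻¹ * z 1)⁻¹ * (t 0 - y 0 * (y 1)⁻¹ * t 1) *
    (t 0 - x 0 * (x 1)⁻¹ * t 1)⁻¹ * (z 0 - x 0 * (x 1)⁻¹ * z 1)

/-- `κ(x, y, z, t)` is said to be defined when `x₂`, `y₂`, `z₁ − y₁y₂⁻¹z₂` and
`t₁ − x₁x₂⁻¹t₂` are all nonzero. -/
def ncrDefined {R : Type*} [DivisionRing R] (x y z t : Fin 2 → R) : Prop :=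
  x 1 ≠ 0 ∧ y 1 ≠ 0 ∧ z 0 - y 0 * (y 1)⁻¹ * z 1 ≠ 0 ∧ t 0 - x 0 * (x 1)⁻¹ * t 1 ≠ 0


lemma key_alg {R : Type*} [DivisionRing R] (a b c d x0 x1 v0 v1 lx lv : R)
    (hx1 : x1 ≠ 0) (hlx : lx ≠ 0) (h : (c * x0 + d * x1) * lx ≠ 0) :
    (a * v0 + b * v1) * lv
        - (a * x0 + b * x1) * lx * ((c * x0 + d * x1) * lx)⁻¹ * ((c * v0 + d * v1) * lv)
      = (a - (a * (x0 * x1⁻¹) + b) * (c * (x0 * x1⁻¹) + d)⁻¹ * c)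
          * (v0 - x0 * x1⁻¹ * v1) * lv := by
  have hcx : c * x0 + d * x1 ≠ 0 := fun h0 => h (by rw [h0, zero_mul])
  set p := x0 * x1⁻¹ with hp
  have hx0 : x0 = p * x1 := by rw [hp, mul_assoc, inv_mul_cancel₀ hx1, mul_one]
  have e1 : a * x0 + b * x1 = (a * p + b) * x1 := by rw [hx0]; noncomm_ring
  have e2 : c * x0 + d * x1 = (c * p + d) * x1 := by rw [hx0]; noncomm_ring
  have hcp : c * p + d ≠ 0 := fun h0 => hcx (by rw [e2, h0, zero_mul])
  rw [e1, e2, mul_inv_rev, mul_inv_rev]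
  simp only [mul_assoc]
  rw [mul_inv_cancel_left₀ hlx, mul_inv_cancel_left₀ hx1]
  simp only [← mul_assoc]
  set q := (a * p + b) * (c * p + d)⁻¹ with hqdef
  have hq : q * (c * p + d) = a * p + b := by
    rw [hqdef, mul_assoc, inv_mul_cancel₀ hcp, mul_one]
  have hb : b = q * (c * p + d) - a * p := by rw [hq, add_sub_cancel_left]
  rw [hb]
  noncomm_ring

/-- Relative invariance of the non-commutative cross-ratio under the action of
`GL₂(R) × (R^×)⁴`:
`κ(g·x·λ₁, g·y·λ₂, g·z·λ₃, g·t·λ₄) = λ₃⁻¹ · κ(x, y, z, t) · λ₃`. -/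
theorem stmt_6 {R : Type*} [DivisionRing R] (x y z t : Fin 2 → R)
    (g : Matrix (Fin 2) (Fin 2) R) (hg : IsUnit g)
    (l1 l2 l3 l4 : R) (h1 : l1 ≠ 0) (h2 : l2 ≠ 0) (h3 : l3 ≠ 0) (h4 : l4 ≠ 0)
    (hdef : ncrDefined x y z t)
    (hdef' : ncrDefined (fun r => (g.mulVec x) r * l1) (fun r => (g.mulVec y) r * l2)
      (fun r => (g.mulVec z) r * l3) (fun r => (g.mulVec t) r * l4)) :
    ncr (fun r => (g.mulVec x) r * l1) (fun r => (g.mulVec y) r * l2)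
        (fun r => (g.mulVec z) r * l3) (fun r => (g.mulVec t) r * l4)
      = l3⁻¹ * ncr x y z t * l3 := by
  have hmv : ∀ (v : Fin 2 → R) (r : Fin 2), g.mulVec v r = g r 0 * v 0 + g r 1 * v 1 := by
    intro v r; simp [Matrix.mulVec, dotProduct, Fin.sum_univ_two]
  obtain ⟨hx1, hy1, hyz, hxt⟩ := hdef
  obtain ⟨hx1', hy1', hyz', hxt'⟩ := hdef'
  simp only [hmv] at hx1' hy1' hyz' hxt'
  have Exz := key_alg (g 0 0) (g 0 1) (g 1 0) (g 1 1) (x 0) (x 1) (z 0) (z 1) l1 l3 hx1 h1 hx1'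
  have Ext := key_alg (g 0 0) (g 0 1) (g 1 0) (g 1 1) (x 0) (x 1) (t 0) (t 1) l1 l4 hx1 h1 hx1'
  have Eyz := key_alg (g 0 0) (g 0 1) (g 1 0) (g 1 1) (y 0) (y 1) (z 0) (z 1) l2 l3 hy1 h2 hy1'
  have Eyt := key_alg (g 0 0) (g 0 1) (g 1 0) (g 1 1) (y 0) (y 1) (t 0) (t 1) l2 l4 hy1 h2 hy1'
  set μx := g 0 0 - (g 0 0 * (x 0 * (x 1)⁻¹) + g 0 1) * (g 1 0 * (x 0 * (x 1)⁻¹) + g 1 1)⁻¹ * g 1 0 with hμxd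
  set μy := g 0 0 - (g 0 0 * (y 0 * (y 1)⁻¹) + g 0 1) * (g 1 0 * (y 0 * (y 1)⁻¹) + g 1 1)⁻¹ * g 1 0 with hμyd
  rw [Eyz] at hyz'
  rw [Ext] at hxt'
  have hμy : μy ≠ 0 := fun h0 => hyz' (by rw [h0, zero_mul, zero_mul])
  have hμx : μx ≠ 0 := fun h0 => hxt' (by rw [h0, zero_mul, zero_mul])
  simp only [ncr, hmv]
  rw [Eyz, Ext, Eyt, Exz]
  rw [mul_inv_rev, mul_inv_rev, mul_inv_rev, mul_inv_rev]
  simp only [mul_assoc]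
  rw [inv_mul_cancel_left₀ hμy, mul_inv_cancel_left₀ h4, inv_mul_cancel_left₀ hμx]
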